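/- arXiv:1208.2573 — 2 statements merged into one kernel-verified Lean document; each statement's English description precedes it below -/
import Mathlib

section
/- Let f : [a,b] → ℝ (a < b) be such that f′ is absolutely continuous on [a,b], f″ ∈ L¹[a,b], and |f″|^q is s-concave in the second sense on [a,b] for some fixed s ∈ (0,1], where q > 1 and 1/p + 1/q = 1. Then |(1/(b−a))∫_a^b f(t) dt − f((a+b)/2)| ≤ (2^{(s−1)/q}(b−a)²/(16(2p+1)^{1/p}))[|f″((3a+b)/4)| + |f″((a+3b)/4)|]. -/
/-!
Integrating by parts twice, `2 (∫_a^b f - (b - a) f(m)) = ∫_a^m (t - a)² f'' + ∫_m^b (b - t)² f''`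
with `m = (a + b) / 2`. On each half, of length `h = (b - a) / 2`, Hölder's inequality separates the
weight, whose `p`-th power integrates to `h^(2p+1) / (2p+1)`, from `∫ |f''|^q`, and the
Hermite–Hadamard inequality for the `s`-concave function `|f''|^q` bounds the latter by
`2^(s-1) h |f''|^q` at the midpoint of the half, i.e. at a quarter point of `[a, b]`.
-/

open MeasureTheory

def SConcaveOn (s : ℝ) (D : Set ℝ) (g : ℝ → ℝ) : Prop :=
  ∀ x ∈ D, ∀ y ∈ D, ∀ α β : ℝ, 0 ≤ α → 0 ≤ β → α + β = 1 →
    α ^ s * g x + β ^ s * g y ≤ g (α * x + β * y)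

open Set intervalIntegral

namespace SConcaveOn

variable {s c d : ℝ} {D : Set ℝ} {g : ℝ → ℝ}

theorem mono {D' : Set ℝ} (hg : SConcaveOn s D g) (h : D' ⊆ D) : SConcaveOn s D' g :=
  fun x hx y hy => hg x (h hx) y (h hy)

theorem add_le_two_rpow_mul (hg : SConcaveOn s D g) {x y : ℝ} (hx : x ∈ D) (hy : y ∈ D) :
    g x + g y ≤ 2 ^ s * g ((x + y) / 2) := by
  have key := hg x hx y hy (1 / 2) (1 / 2) (by norm_num) (by norm_num) (by norm_num)
  rw [show (1 / 2 : ℝ) * x + 1 / 2 * y = (x + y) / 2 by ring, ← mul_add,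
    Real.div_rpow zero_le_one zero_le_two, Real.one_rpow] at key
  have h2s : (0 : ℝ) < 2 ^ s := by positivity
  rwa [div_mul_eq_mul_div, one_mul, div_le_iff₀' h2s] at key

theorem add_reflect_le (hg : SConcaveOn s (Icc c d) g) {t : ℝ} (ht : t ∈ Icc c d) :
    g t + g (c + d - t) ≤ 2 ^ s * g ((c + d) / 2) := by
  have ht' : c + d - t ∈ Icc c d := ⟨by linarith [ht.2], by linarith [ht.1]⟩
  simpa using hg.add_le_two_rpow_mul ht ht'

theorem le_two_rpow_mul_midpoint (hg : SConcaveOn s (Icc c d) g)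
    (hg0 : ∀ t ∈ Icc c d, 0 ≤ g t) {t : ℝ} (ht : t ∈ Icc c d) :
    g t ≤ 2 ^ s * g ((c + d) / 2) := by
  have ht' : c + d - t ∈ Icc c d := ⟨by linarith [ht.2], by linarith [ht.1]⟩
  linarith [hg.add_reflect_le ht, hg0 _ ht']

theorem intervalIntegrable (hg : SConcaveOn s (Icc c d) g) (hg0 : ∀ t ∈ Icc c d, 0 ≤ g t)
    (hcd : c ≤ d) (hgm : AEStronglyMeasurable g (volume.restrict (Ioc c d))) :
    IntervalIntegrable g volume c d := by
  rw [← uIoc_of_le hcd] at hgm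
  refine (intervalIntegrable_const (c := 2 ^ s * g ((c + d) / 2))).mono_fun' hgm ?_
  filter_upwards [ae_restrict_mem measurableSet_uIoc] with t ht
  rw [uIoc_of_le hcd] at ht
  have ht' : t ∈ Icc c d := Ioc_subset_Icc_self ht
  rw [Real.norm_of_nonneg (hg0 t ht')]
  exact hg.le_two_rpow_mul_midpoint hg0 ht'

/-- The Hermite–Hadamard inequality for s-concave functions. -/
theorem integral_le (hg : SConcaveOn s (Icc c d) g) (hcd : c ≤ d)
    (hint : IntervalIntegrable g volume c d) :
    ∫ t in c..d, g t ≤ 2 ^ (s - 1) * (d - c) * g ((c + d) / 2) := by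
  have hreflect : ∫ t in c..d, g (c + d - t) = ∫ t in c..d, g t := by simp
  have hint' : IntervalIntegrable (fun t => g (c + d - t)) volume c d := by
    simpa using (hint.comp_sub_left (c + d)).symm
  have htwice : 2 * ∫ t in c..d, g t ≤ (d - c) * (2 ^ s * g ((c + d) / 2)) := by
    calc 2 * ∫ t in c..d, g t = ∫ t in c..d, (g t + g (c + d - t)) := by
          rw [integral_add hint hint', hreflect, two_mul]
      _ ≤ ∫ _ in c..d, 2 ^ s * g ((c + d) / 2) :=
          integral_mono_on hcd (hint.add hint') intervalIntegrable_const
            fun t ht => hg.add_reflect_le ht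
      _ = (d - c) * (2 ^ s * g ((c + d) / 2)) := by simp; ring
  rw [Real.rpow_sub_one two_ne_zero]
  linarith

end SConcaveOn

theorem abs_integral_mul_le_integral_rpow_mul_integral_rpow {p q c d : ℝ}
    (hpq : p.HolderConjugate q) (hcd : c ≤ d) {w F : ℝ → ℝ} (hw0 : ∀ t ∈ Icc c d, 0 ≤ w t)
    (hw : ContinuousOn w (Icc c d)) (hF : AEStronglyMeasurable F (volume.restrict (Ioc c d)))
    (hFq : IntervalIntegrable (fun t => |F t| ^ q) volume c d) :
    |∫ t in c..d, w t * F t|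
      ≤ (∫ t in c..d, w t ^ p) ^ (1 / p) * (∫ t in c..d, |F t| ^ q) ^ (1 / q) := by
  set μ := volume.restrict (Ioc c d)
  have hmem : ∀ᵐ t ∂μ, t ∈ Icc c d := by
    filter_upwards [ae_restrict_mem measurableSet_Ioc] with t ht using Ioc_subset_Icc_self ht
  have hwp : MemLp w (ENNReal.ofReal p) μ := by
    obtain ⟨M, hM⟩ := isCompact_Icc.exists_bound_of_continuousOn hw
    refine MemLp.of_bound ((hw.mono Ioc_subset_Icc_self).aestronglyMeasurable measurableSet_Ioc)
      M ?_
    filter_upwards [hmem] with t ht using hM t ht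
  have hFq' : MemLp (fun t => |F t|) (ENNReal.ofReal q) μ := by
    refine MemLp.abs ?_
    rw [← integrable_norm_rpow_iff hF (by simp [hpq.symm.pos]) ENNReal.ofReal_ne_top,
      ENNReal.toReal_ofReal hpq.symm.nonneg]
    exact (intervalIntegrable_iff_integrableOn_Ioc_of_le hcd).mp hFq
  have hholder := integral_mul_le_Lp_mul_Lq_of_nonneg hpq
    (by filter_upwards [hmem] with t ht using hw0 t ht)
    (Filter.Eventually.of_forall fun t => abs_nonneg (F t)) hwp hFq'
  calc |∫ t in c..d, w t * F t| ≤ ∫ t in c..d, |w t * F t| := abs_integral_le_integral_abs hcd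
    _ = ∫ t, w t * |F t| ∂μ := by
        rw [integral_of_le hcd]
        refine integral_congr_ae ?_
        filter_upwards [hmem] with t ht
        rw [abs_mul, abs_of_nonneg (hw0 t ht)]
    _ ≤ _ := by simpa only [integral_of_le hcd] using hholder

theorem integral_sq_sub_right_rpow {p c d : ℝ} (hp : -1 < 2 * p) (hcd : c ≤ d) :
    ∫ t in c..d, ((t - c) ^ 2) ^ p = (d - c) ^ (2 * p + 1) / (2 * p + 1) := by
  have hpow : EqOn (fun t => ((t - c) ^ 2) ^ p) (fun t => (t - c) ^ (2 * p)) (uIcc c d) := by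
    intro t ht
    rw [uIcc_of_le hcd] at ht
    dsimp only
    rw [← Real.rpow_natCast, ← Real.rpow_mul (by linarith [ht.1])]
    norm_num
  rw [integral_congr hpow, integral_comp_sub_right (fun x => x ^ (2 * p)), sub_self,
    integral_rpow (Or.inl hp), Real.zero_rpow (by linarith), sub_zero]

theorem integral_sq_sub_left_rpow {p c d : ℝ} (hp : -1 < 2 * p) (hcd : c ≤ d) :
    ∫ t in c..d, ((d - t) ^ 2) ^ p = (d - c) ^ (2 * p + 1) / (2 * p + 1) := by
  have hreflect := integral_comp_sub_left (fun t => ((t - c) ^ 2) ^ p) (c + d) (a := c) (b := d)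
  rw [add_sub_cancel_right, add_sub_cancel_left] at hreflect
  rw [← integral_sq_sub_right_rpow hp hcd, ← hreflect]
  congr 1 with t
  ring_nf

section PeanoKernel

variable {f f' f'' : ℝ → ℝ} {c d : ℝ}

theorem integral_sq_sub_right_mul_eq (hcd : c ≤ d)
    (hf' : ∀ t ∈ Icc c d, HasDerivAt f (f' t) t) (hf'' : ∀ t ∈ Icc c d, HasDerivAt f' (f'' t) t)
    (hint : IntervalIntegrable f'' volume c d) :
    ∫ t in c..d, (t - c) ^ 2 * f'' t = (d - c) ^ 2 * f' d - 2 * (d - c) * f d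
      + 2 * ∫ t in c..d, f t := by
  rw [← uIcc_of_le hcd] at hf' hf''
  have hf : IntervalIntegrable f volume c d :=
    ContinuousOn.intervalIntegrable fun t ht => (hf' t ht).continuousAt.continuousWithinAt
  have hkernel : IntervalIntegrable (fun t => (t - c) ^ 2 * f'' t) volume c d :=
    hint.continuousOn_mul (by fun_prop)
  have hderiv : ∀ t ∈ uIcc c d, HasDerivAt (fun t => (t - c) ^ 2 * f' t - 2 * (t - c) * f t)
      ((t - c) ^ 2 * f'' t - 2 * f t) t := by
    intro t ht
    have h := ((((hasDerivAt_id' t).sub_const c).fun_pow 2).fun_mul (hf'' t ht)).fun_sub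
      ((((hasDerivAt_id' t).sub_const c).const_mul 2).fun_mul (hf' t ht))
    exact h.congr_deriv (by norm_num; ring)
  have hftc := integral_eq_sub_of_hasDerivAt hderiv (hkernel.sub (hf.const_mul 2))
  rw [integral_sub hkernel (hf.const_mul 2), intervalIntegral.integral_const_mul] at hftc
  simp only [sub_self] at hftc
  linarith

theorem integral_sq_sub_left_mul_eq (hcd : c ≤ d)
    (hf' : ∀ t ∈ Icc c d, HasDerivAt f (f' t) t) (hf'' : ∀ t ∈ Icc c d, HasDerivAt f' (f'' t) t)
    (hint : IntervalIntegrable f'' volume c d) :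
    ∫ t in c..d, (d - t) ^ 2 * f'' t = -((d - c) ^ 2 * f' c) - 2 * (d - c) * f c
      + 2 * ∫ t in c..d, f t := by
  rw [← uIcc_of_le hcd] at hf' hf''
  have hf : IntervalIntegrable f volume c d :=
    ContinuousOn.intervalIntegrable fun t ht => (hf' t ht).continuousAt.continuousWithinAt
  have hkernel : IntervalIntegrable (fun t => (d - t) ^ 2 * f'' t) volume c d :=
    hint.continuousOn_mul (by fun_prop)
  have hderiv : ∀ t ∈ uIcc c d, HasDerivAt (fun t => (d - t) ^ 2 * f' t + 2 * (d - t) * f t)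
      ((d - t) ^ 2 * f'' t - 2 * f t) t := by
    intro t ht
    have h := ((((hasDerivAt_id' t).const_sub d).fun_pow 2).fun_mul (hf'' t ht)).fun_add
      ((((hasDerivAt_id' t).const_sub d).const_mul 2).fun_mul (hf' t ht))
    exact h.congr_deriv (by norm_num; ring)
  have hftc := integral_eq_sub_of_hasDerivAt hderiv (hkernel.sub (hf.const_mul 2))
  rw [integral_sub hkernel (hf.const_mul 2), intervalIntegral.integral_const_mul] at hftc
  simp only [sub_self] at hftc
  linarith

theorem two_mul_integral_sub_midpoint_eq {a b : ℝ} (hab : a ≤ b)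
    (hf' : ∀ t ∈ Icc a b, HasDerivAt f (f' t) t) (hf'' : ∀ t ∈ Icc a b, HasDerivAt f' (f'' t) t)
    (hint : IntervalIntegrable f'' volume a b) :
    2 * ((∫ t in a..b, f t) - (b - a) * f ((a + b) / 2))
      = (∫ t in a..(a + b) / 2, (t - a) ^ 2 * f'' t)
        + ∫ t in (a + b) / 2..b, (b - t) ^ 2 * f'' t := by
  set m := (a + b) / 2 with hm
  have ham : a ≤ m := by linarith
  have hmb : m ≤ b := by linarith
  have hmid : m ∈ uIcc a b := mem_uIcc_of_le ham hmb
  have hleft : Icc a m ⊆ Icc a b := Icc_subset_Icc_right hmb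
  have hright : Icc m b ⊆ Icc a b := Icc_subset_Icc_left ham
  have hf : IntervalIntegrable f volume a b := ContinuousOn.intervalIntegrable_of_Icc hab
    fun t ht => (hf' t ht).continuousAt.continuousWithinAt
  rw [integral_sq_sub_right_mul_eq ham (fun t ht => hf' t (hleft ht))
      (fun t ht => hf'' t (hleft ht)) (hint.mono_set (uIcc_subset_uIcc left_mem_uIcc hmid)),
    integral_sq_sub_left_mul_eq hmb (fun t ht => hf' t (hright ht))
      (fun t ht => hf'' t (hright ht)) (hint.mono_set (uIcc_subset_uIcc hmid right_mem_uIcc)),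
    ← integral_add_adjacent_intervals (hf.mono_set (uIcc_subset_uIcc left_mem_uIcc hmid))
      (hf.mono_set (uIcc_subset_uIcc hmid right_mem_uIcc))]
  have hma : m - a = (b - a) / 2 := by linarith
  have hbm : b - m = (b - a) / 2 := by linarith
  rw [hma, hbm]
  ring

end PeanoKernel

theorem abs_integral_mul_le_of_sConcaveOn {p q s c d : ℝ} (hpq : p.HolderConjugate q)
    (hcd : c ≤ d) {w F : ℝ → ℝ} (hw0 : ∀ t ∈ Icc c d, 0 ≤ w t) (hw : ContinuousOn w (Icc c d))
    (hF : IntervalIntegrable F volume c d) (hconc : SConcaveOn s (Icc c d) fun t => |F t| ^ q) :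
    |∫ t in c..d, w t * F t|
      ≤ (∫ t in c..d, w t ^ p) ^ (1 / p) * (2 ^ (s - 1) * (d - c)) ^ (1 / q)
        * |F ((c + d) / 2)| := by
  have hq0 : 0 < q := hpq.symm.pos
  have hg0 : ∀ t, 0 ≤ |F t| ^ q := fun t => by positivity
  have hFq : IntervalIntegrable (fun t => |F t| ^ q) volume c d :=
    hconc.intervalIntegrable (fun t _ => hg0 t) hcd
      ((continuous_abs.rpow_const fun _ => Or.inr hq0.le).comp_aestronglyMeasurable
        hF.aestronglyMeasurable)
  have hHH : (∫ t in c..d, |F t| ^ q) ^ (1 / q)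
      ≤ (2 ^ (s - 1) * (d - c)) ^ (1 / q) * |F ((c + d) / 2)| := by
    calc (∫ t in c..d, |F t| ^ q) ^ (1 / q)
        ≤ (2 ^ (s - 1) * (d - c) * |F ((c + d) / 2)| ^ q) ^ (1 / q) :=
          Real.rpow_le_rpow (integral_nonneg hcd fun t _ => hg0 t)
            (hconc.integral_le hcd hFq) (by positivity)
      _ = (2 ^ (s - 1) * (d - c)) ^ (1 / q) * |F ((c + d) / 2)| := by
          rw [Real.mul_rpow (by have := sub_nonneg.mpr hcd; positivity) (hg0 _), one_div,
            Real.rpow_rpow_inv (abs_nonneg _) hq0.ne']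
  calc |∫ t in c..d, w t * F t|
      ≤ (∫ t in c..d, w t ^ p) ^ (1 / p) * (∫ t in c..d, |F t| ^ q) ^ (1 / q) :=
        abs_integral_mul_le_integral_rpow_mul_integral_rpow hpq hcd hw0 hw
          hF.aestronglyMeasurable hFq
    _ ≤ _ := by
        rw [mul_assoc]
        exact mul_le_mul_of_nonneg_left hHH <| Real.rpow_nonneg
          (integral_nonneg hcd fun t ht => Real.rpow_nonneg (hw0 t ht) p) _

theorem rpow_div_mul_rpow_eq_of_holderConjugate {p q s h : ℝ} (hpq : p.HolderConjugate q)
    (hh : 0 ≤ h) :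
    (h ^ (2 * p + 1) / (2 * p + 1)) ^ (1 / p) * (2 ^ (s - 1) * h) ^ (1 / q)
      = 2 ^ ((s - 1) / q) * h ^ 3 / (2 * p + 1) ^ (1 / p) := by
  have hp0 : 0 < p := hpq.pos
  have hexp : (2 * p + 1) * (1 / p) + 1 / q = 3 := by
    have h2p : (2 * p + 1) * (1 / p) = 2 + 1 / p := by field_simp
    linarith [hpq.one_div_add_one_div]
  calc (h ^ (2 * p + 1) / (2 * p + 1)) ^ (1 / p) * (2 ^ (s - 1) * h) ^ (1 / q)
      = h ^ ((2 * p + 1) * (1 / p)) * h ^ (1 / q) * 2 ^ ((s - 1) * (1 / q))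
        / (2 * p + 1) ^ (1 / p) := by
        rw [Real.div_rpow (Real.rpow_nonneg hh _) (by linarith), Real.mul_rpow (by positivity) hh,
          ← Real.rpow_mul hh, ← Real.rpow_mul zero_le_two]
        ring
    _ = 2 ^ ((s - 1) / q) * h ^ 3 / (2 * p + 1) ^ (1 / p) := by
        rw [← Real.rpow_add' hh (by rw [hexp]; norm_num), hexp, mul_one_div]
        norm_cast
        ring

theorem abs_integral_sq_sub_right_mul_le {p q s c d : ℝ} (hpq : p.HolderConjugate q)
    (hcd : c ≤ d) {F : ℝ → ℝ} (hF : IntervalIntegrable F volume c d)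
    (hconc : SConcaveOn s (Icc c d) fun t => |F t| ^ q) :
    |∫ t in c..d, (t - c) ^ 2 * F t|
      ≤ 2 ^ ((s - 1) / q) * (d - c) ^ 3 / (2 * p + 1) ^ (1 / p) * |F ((c + d) / 2)| := by
  have h := abs_integral_mul_le_of_sConcaveOn hpq hcd (fun t _ => sq_nonneg (t - c))
    (by fun_prop) hF hconc
  rwa [integral_sq_sub_right_rpow (by linarith [hpq.pos]) hcd,
    rpow_div_mul_rpow_eq_of_holderConjugate hpq (sub_nonneg.mpr hcd)] at h

theorem abs_integral_sq_sub_left_mul_le {p q s c d : ℝ} (hpq : p.HolderConjugate q)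
    (hcd : c ≤ d) {F : ℝ → ℝ} (hF : IntervalIntegrable F volume c d)
    (hconc : SConcaveOn s (Icc c d) fun t => |F t| ^ q) :
    |∫ t in c..d, (d - t) ^ 2 * F t|
      ≤ 2 ^ ((s - 1) / q) * (d - c) ^ 3 / (2 * p + 1) ^ (1 / p) * |F ((c + d) / 2)| := by
  have h := abs_integral_mul_le_of_sConcaveOn hpq hcd (fun t _ => sq_nonneg (d - t))
    (by fun_prop) hF hconc
  rwa [integral_sq_sub_left_rpow (by linarith [hpq.pos]) hcd,
    rpow_div_mul_rpow_eq_of_holderConjugate hpq (sub_nonneg.mpr hcd)] at h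

theorem stmt16_general (a b : ℝ) (hab : a < b) (f f' f'' : ℝ → ℝ)
    (hf' : ∀ t ∈ Set.Icc a b, HasDerivAt f (f' t) t)
    (hf'' : ∀ t ∈ Set.Icc a b, HasDerivAt f' (f'' t) t)
    (hint : IntervalIntegrable f'' volume a b)
    (s : ℝ)
    (p q : ℝ) (hp : 1 < p) (hpq : 1 / p + 1 / q = 1)
    (hconc : SConcaveOn s (Set.Icc a b) (fun t => |f'' t| ^ q)) :
    |((1 / (b - a)) * ∫ t in a..b, f t) - f ((a + b) / 2)|
      ≤ (2 : ℝ) ^ ((s - 1) / q) * (b - a) ^ 2 / (16 * (2 * p + 1) ^ (1 / p)) *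
          (|f'' ((3 * a + b) / 4)| + |f'' ((a + 3 * b) / 4)|) := by
  have hpq' : p.HolderConjugate q :=
    Real.holderConjugate_iff.mpr ⟨hp, by simpa only [one_div] using hpq⟩
  have ham : a ≤ (a + b) / 2 := by linarith
  have hmb : (a + b) / 2 ≤ b := by linarith
  have hmid : (a + b) / 2 ∈ uIcc a b := mem_uIcc_of_le ham hmb
  have hleft := abs_integral_sq_sub_right_mul_le hpq' ham
    (hint.mono_set (uIcc_subset_uIcc left_mem_uIcc hmid))
    (hconc.mono (Icc_subset_Icc_right hmb))
  have hright := abs_integral_sq_sub_left_mul_le hpq' hmb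
    (hint.mono_set (uIcc_subset_uIcc hmid right_mem_uIcc))
    (hconc.mono (Icc_subset_Icc_left ham))
  rw [show (a + (a + b) / 2) / 2 = (3 * a + b) / 4 by ring,
    show (a + b) / 2 - a = (b - a) / 2 by ring] at hleft
  rw [show ((a + b) / 2 + b) / 2 = (a + 3 * b) / 4 by ring,
    show b - (a + b) / 2 = (b - a) / 2 by ring] at hright
  have hba : 0 < b - a := sub_pos.mpr hab
  set K := 2 ^ ((s - 1) / q) * ((b - a) / 2) ^ 3 / (2 * p + 1) ^ (1 / p) with hK
  have hnormalize : (1 / (b - a)) * (∫ t in a..b, f t) - f ((a + b) / 2)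
      = 2 * ((∫ t in a..b, f t) - (b - a) * f ((a + b) / 2)) / (2 * (b - a)) := by
    field_simp
  calc |((1 / (b - a)) * ∫ t in a..b, f t) - f ((a + b) / 2)|
      = |2 * ((∫ t in a..b, f t) - (b - a) * f ((a + b) / 2))| / (2 * (b - a)) := by
        rw [hnormalize, abs_div, abs_of_pos (by positivity : 0 < 2 * (b - a))]
    _ ≤ (K * |f'' ((3 * a + b) / 4)| + K * |f'' ((a + 3 * b) / 4)|) / (2 * (b - a)) := by
        rw [two_mul_integral_sub_midpoint_eq hab.le hf' hf'' hint]
        gcongr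
        exact (abs_add_le _ _).trans (add_le_add hleft hright)
    _ = _ := by
        rw [hK]
        field_simp
        ring

theorem stmt16 (a b : ℝ) (ha : 0 ≤ a) (hab : a < b) (f f' f'' : ℝ → ℝ)
    (hf' : ∀ t ∈ Set.Icc a b, HasDerivAt f (f' t) t)
    (hf'' : ∀ t ∈ Set.Icc a b, HasDerivAt f' (f'' t) t)
    (hint : IntervalIntegrable f'' volume a b)
    (s : ℝ) (hs0 : 0 < s) (hs1 : s ≤ 1)
    (p q : ℝ) (hp : 1 < p) (hq : 1 < q) (hpq : 1 / p + 1 / q = 1)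
    (hconc : SConcaveOn s (Set.Icc a b) (fun t => |f'' t| ^ q)) :
    |((1 / (b - a)) * ∫ t in a..b, f t) - f ((a + b) / 2)|
      ≤ (2 : ℝ) ^ ((s - 1) / q) * (b - a) ^ 2 / (16 * (2 * p + 1) ^ (1 / p)) *
          (|f'' ((3 * a + b) / 4)| + |f'' ((a + 3 * b) / 4)|) :=
  stmt16_general a b hab f f' f'' hf' hf'' hint s p q hp hpq hconc
end

section
/- Let 0 < a < b, 0 < s < 1, and q > 1 with 1/p + 1/q = 1. Then |L_s^s(a,b) − A(a,b)^s| ≤ ((b−a)² s(1−s)/(16(s+1)^{1/q}(2p+1)^{1/p}))[(a^{(s−2)q} + A(a,b)^{(s−2)q})^{1/q} + (A(a,b)^{(s−2)q} + b^{(s−2)q})^{1/q}]. (Here s(1−s) = |s(s−1)| is the absolute value of the second derivative coefficient of x ↦ x^s.) -/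
/-!
For `f x = x ^ s` and `m = (a + b) / 2`, the midpoint-rule error has the Peano-kernel form
`m ^ s - L = s (1 - s) / (2 (b - a)) * (∫_a^m (x - a)² x^(s-2) + ∫_m^b (x - b)² x^(s-2))`,
where `L = L_s^s(a, b)`. Bounding the convex factor `x ^ (s - 2)` by its chords on `[a, m]` and
`[m, b]` gives `0 ≤ m ^ s - L ≤ (b - a)² s (1 - s) (a^(s-2) + 6 m^(s-2) + b^(s-2)) / 192`, and
midpoint convexity turns this into `(b - a)² s (1 - s) (a^(s-2) + 2 m^(s-2) + b^(s-2)) / 96`.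
The right-hand side dominates this: by the power mean inequality
`(u^((s-2)q) + v^((s-2)q))^(1/q) ≥ 2^(1/q) (u^(s-2) + v^(s-2)) / 2`, while
`(s + 1)^(1/q) ≤ 2^(1/q)` and, by Bernoulli, `(2p + 1)^(1/p) ≤ 3`.
-/

open Set intervalIntegral Interval

theorem convexOn_rpow_of_nonpos {c : ℝ} (hc : c ≤ 0) :
    ConvexOn ℝ (Ioi 0) fun x : ℝ ↦ x ^ c := by
  have hlog : ConvexOn ℝ (Ioi 0) fun x ↦ c * Real.log x := by
    simpa [smul_eq_mul, neg_mul_neg] using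
      strictConcaveOn_log_Ioi.concaveOn.neg.smul (neg_nonneg.2 hc)
  have himg : Convex ℝ ((fun x ↦ c * Real.log x) '' Ioi 0) :=
    (isPreconnected_Ioi.image _
      ((Real.continuousOn_log.mono fun _ hx ↦ ne_of_gt hx).const_smul c)).convex
  refine ((convexOn_exp.subset (subset_univ _) himg).comp hlog
    (Real.exp_monotone.monotoneOn _)).congr fun x hx ↦ ?_
  simp [Real.rpow_def_of_pos hx, mul_comm]

theorem ConvexOn.le_chord {s : Set ℝ} {g : ℝ → ℝ} (hg : ConvexOn ℝ s g) {u v x : ℝ}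
    (hu : u ∈ s) (hv : v ∈ s) (huv : u < v) (hx : x ∈ Icc u v) :
    g x ≤ ((v - x) * g u + (x - u) * g v) / (v - u) := by
  have hvu : v - u ≠ 0 := sub_ne_zero.2 huv.ne'
  have h := hg.2 hu hv (div_nonneg (sub_nonneg.2 hx.2) (sub_pos.2 huv).le)
    (div_nonneg (sub_nonneg.2 hx.1) (sub_pos.2 huv).le) (by field_simp; ring)
  have hx' : ((v - x) / (v - u)) • u + ((x - u) / (v - u)) • v = x := by
    simp only [smul_eq_mul]; field_simp; ring
  rw [hx', smul_eq_mul, smul_eq_mul] at h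
  exact h.trans_eq (by ring)

theorem ConvexOn.map_add_div_two_le {s : Set ℝ} {g : ℝ → ℝ} (hg : ConvexOn ℝ s g) {x y : ℝ}
    (hx : x ∈ s) (hy : y ∈ s) : g ((x + y) / 2) ≤ (g x + g y) / 2 := by
  have h := hg.2 hx hy (by norm_num : (0 : ℝ) ≤ 1 / 2) (by norm_num : (0 : ℝ) ≤ 1 / 2)
    (by norm_num)
  simp only [smul_eq_mul, one_div_mul_eq_div] at h
  rwa [add_div, add_div]

theorem ConvexOn.integral_mul_le_integral_mul_chord {g w : ℝ → ℝ} {u v : ℝ} (huv : u < v)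
    (hg : ConvexOn ℝ (Icc u v) g) (hgc : ContinuousOn g (Icc u v)) (hw : Continuous w)
    (hw0 : ∀ x ∈ Icc u v, 0 ≤ w x) :
    ∫ x in u..v, w x * g x
      ≤ ∫ x in u..v, w x * (((v - x) * g u + (x - u) * g v) / (v - u)) := by
  refine integral_mono_on huv.le ?_ (by apply Continuous.intervalIntegrable; fun_prop)
    fun x hx ↦ mul_le_mul_of_nonneg_left
      (hg.le_chord (left_mem_Icc.2 huv.le) (right_mem_Icc.2 huv.le) huv hx) (hw0 x hx)
  exact ((hw.continuousOn).mul hgc).intervalIntegrable_of_Icc huv.le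

theorem integral_sq_sub_left_mul_chord {u v : ℝ} (huv : u ≠ v) (U V : ℝ) :
    ∫ x in u..v, (x - u) ^ 2 * (((v - x) * U + (x - u) * V) / (v - u))
      = (v - u) ^ 3 * (U + 3 * V) / 12 := by
  have hvu : v - u ≠ 0 := sub_ne_zero.2 huv.symm
  have e : ∀ x, (x - u) ^ 2 * (((v - x) * U + (x - u) * V) / (v - u))
      = U * (x - u) ^ 2 + (V - U) / (v - u) * (x - u) ^ 3 := by
    intro x; field_simp; ring
  simp only [e]
  rw [integral_add (by apply Continuous.intervalIntegrable; fun_prop)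
      (by apply Continuous.intervalIntegrable; fun_prop),
    integral_const_mul, integral_const_mul,
    integral_comp_sub_right (fun x ↦ x ^ 2), integral_comp_sub_right (fun x ↦ x ^ 3)]
  simp only [integral_pow]
  field_simp
  ring

theorem integral_sq_sub_right_mul_chord {u v : ℝ} (huv : u ≠ v) (U V : ℝ) :
    ∫ x in u..v, (x - v) ^ 2 * (((v - x) * U + (x - u) * V) / (v - u))
      = (v - u) ^ 3 * (3 * U + V) / 12 := by
  have hvu : v - u ≠ 0 := sub_ne_zero.2 huv.symm
  have e : ∀ x, (x - v) ^ 2 * (((v - x) * U + (x - u) * V) / (v - u))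
      = V * (x - v) ^ 2 + (V - U) / (v - u) * (x - v) ^ 3 := by
    intro x; field_simp; ring
  simp only [e]
  rw [integral_add (by apply Continuous.intervalIntegrable; fun_prop)
      (by apply Continuous.intervalIntegrable; fun_prop),
    integral_const_mul, integral_const_mul,
    integral_comp_sub_right (fun x ↦ x ^ 2), integral_comp_sub_right (fun x ↦ x ^ 3)]
  simp only [integral_pow]
  field_simp
  ring

theorem ConvexOn.integral_sq_sub_left_mul_le {g : ℝ → ℝ} {u v : ℝ} (huv : u < v)
    (hg : ConvexOn ℝ (Icc u v) g) (hgc : ContinuousOn g (Icc u v)) :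
    ∫ x in u..v, (x - u) ^ 2 * g x ≤ (v - u) ^ 3 * (g u + 3 * g v) / 12 :=
  (hg.integral_mul_le_integral_mul_chord huv hgc (by fun_prop) fun _ _ ↦ sq_nonneg _).trans_eq
    (integral_sq_sub_left_mul_chord huv.ne _ _)

theorem ConvexOn.integral_sq_sub_right_mul_le {g : ℝ → ℝ} {u v : ℝ} (huv : u < v)
    (hg : ConvexOn ℝ (Icc u v) g) (hgc : ContinuousOn g (Icc u v)) :
    ∫ x in u..v, (x - v) ^ 2 * g x ≤ (v - u) ^ 3 * (3 * g u + g v) / 12 :=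
  (hg.integral_mul_le_integral_mul_chord huv hgc (by fun_prop) fun _ _ ↦ sq_nonneg _).trans_eq
    (integral_sq_sub_right_mul_chord huv.ne _ _)

theorem integral_sq_sub_mul_rpow {s : ℝ} (hs : s ≠ 0) (hs1 : s ≠ 1) (hs2 : s ≠ -1)
    {u v : ℝ} (h0 : (0 : ℝ) ∉ [[u, v]]) (c : ℝ) :
    ∫ x in u..v, (x - c) ^ 2 * x ^ (s - 2)
      = (v ^ (s + 1) - u ^ (s + 1)) / (s + 1) - 2 * c * ((v ^ s - u ^ s) / s)
        + c ^ 2 * ((v ^ (s - 1) - u ^ (s - 1)) / (s - 1)) := by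
  have hint : ∀ r : ℝ, IntervalIntegrable (fun x : ℝ ↦ x ^ r) MeasureTheory.volume u v :=
    fun r ↦ intervalIntegral.intervalIntegrable_rpow (Or.inr h0)
  have hexpand : EqOn (fun x : ℝ ↦ (x - c) ^ 2 * x ^ (s - 2))
      (fun x ↦ x ^ s - 2 * c * x ^ (s - 1) + c ^ 2 * x ^ (s - 2)) [[u, v]] := by
    intro x hx
    have hx0 : x ≠ 0 := ne_of_mem_of_not_mem hx h0
    have e1 : x ^ s = x ^ (s - 2) * x ^ 2 := by
      rw [← Real.rpow_add_natCast hx0]; norm_num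
    have e2 : x ^ (s - 1) = x ^ (s - 2) * x := by
      rw [← Real.rpow_add_one hx0]; ring_nf
    simp only [e1, e2]; ring
  rw [integral_congr hexpand, integral_add ((hint s).sub ((hint _).const_mul _))
      ((hint _).const_mul _), integral_sub (hint s) ((hint _).const_mul _),
    integral_const_mul, integral_const_mul,
    integral_rpow (r := s) (Or.inr ⟨hs2, h0⟩),
    integral_rpow (r := s - 1) (Or.inr ⟨fun h ↦ hs (by linarith), h0⟩),
    integral_rpow (r := s - 2) (Or.inr ⟨fun h ↦ hs1 (by linarith), h0⟩)]
  ring_nf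

theorem add_div_two_rpow_sub_eq_integral {a b s : ℝ} (ha : 0 < a) (hab : a < b) (hs : s ≠ 0)
    (hs1 : s ≠ 1) (hs2 : s ≠ -1) :
    ((a + b) / 2) ^ s - (b ^ (s + 1) - a ^ (s + 1)) / ((b - a) * (s + 1))
      = s * (1 - s) / (2 * (b - a)) *
          ((∫ x in a..(a + b) / 2, (x - a) ^ 2 * x ^ (s - 2))
            + ∫ x in (a + b) / 2..b, (x - b) ^ 2 * x ^ (s - 2)) := by
  have hm : 0 < (a + b) / 2 := by linarith
  have hb : 0 < b := ha.trans hab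
  rw [integral_sq_sub_mul_rpow hs hs1 hs2 (notMem_uIcc_of_lt ha hm),
    integral_sq_sub_mul_rpow hs hs1 hs2 (notMem_uIcc_of_lt hm hb)]
  simp only [Real.rpow_add_one, Real.rpow_sub_one, ha.ne', hb.ne', hm.ne', ne_eq,
    not_false_eq_true]
  have hs1' : s - 1 ≠ 0 := sub_ne_zero.2 hs1
  have hs2' : s + 1 ≠ 0 := fun h ↦ hs2 (eq_neg_of_add_eq_zero_left h)
  have hba : b - a ≠ 0 := sub_ne_zero.2 hab.ne'
  field_simp
  ring

theorem abs_sub_add_div_two_rpow_le {a b s : ℝ} (ha : 0 < a) (hab : a < b) (hs0 : 0 < s)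
    (hs1 : s < 1) :
    |(b ^ (s + 1) - a ^ (s + 1)) / ((b - a) * (s + 1)) - ((a + b) / 2) ^ s|
      ≤ (b - a) ^ 2 * s * (1 - s)
          * (a ^ (s - 2) + 6 * ((a + b) / 2) ^ (s - 2) + b ^ (s - 2)) / 192 := by
  have hm : 0 < (a + b) / 2 := by linarith
  have hsub : ∀ {u v : ℝ}, 0 < u → Icc u v ⊆ Ioi 0 := fun hu _ hx ↦ hu.trans_le hx.1
  have hconv : ConvexOn ℝ (Ioi 0) fun x : ℝ ↦ x ^ (s - 2) :=
    convexOn_rpow_of_nonpos (by linarith)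
  have hcont : ContinuousOn (fun x : ℝ ↦ x ^ (s - 2)) (Ioi 0) := fun x hx ↦
    (Real.continuousAt_rpow_const _ _ (Or.inl (ne_of_gt hx))).continuousWithinAt
  have hI₁ := (hconv.subset (hsub ha) (convex_Icc _ _)).integral_sq_sub_left_mul_le
    (show a < (a + b) / 2 by linarith) (hcont.mono (hsub ha))
  have hI₂ := (hconv.subset (hsub hm) (convex_Icc _ _)).integral_sq_sub_right_mul_le
    (show (a + b) / 2 < b by linarith) (hcont.mono (hsub hm))
  have hkernel_nonneg : ∀ {u v c : ℝ}, 0 < u → u ≤ v →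
      0 ≤ ∫ x in u..v, (x - c) ^ 2 * x ^ (s - 2) := fun hu huv ↦
    integral_nonneg huv fun x hx ↦
      mul_nonneg (sq_nonneg _) (Real.rpow_nonneg (hu.le.trans hx.1) _)
  have hcoef : 0 ≤ s * (1 - s) / (2 * (b - a)) :=
    div_nonneg (mul_nonneg hs0.le (by linarith)) (by linarith)
  rw [abs_sub_comm, add_div_two_rpow_sub_eq_integral ha hab hs0.ne' hs1.ne (by linarith),
    abs_of_nonneg (mul_nonneg hcoef (add_nonneg (hkernel_nonneg ha (by linarith))
      (hkernel_nonneg hm (by linarith))))]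
  calc _ ≤ s * (1 - s) / (2 * (b - a))
        * (((a + b) / 2 - a) ^ 3 * (a ^ (s - 2) + 3 * ((a + b) / 2) ^ (s - 2)) / 12
          + (b - (a + b) / 2) ^ 3 * (3 * ((a + b) / 2) ^ (s - 2) + b ^ (s - 2)) / 12) :=
        mul_le_mul_of_nonneg_left (add_le_add hI₁ hI₂) hcoef
    _ = _ := by
        have hba : b - a ≠ 0 := sub_ne_zero.2 hab.ne'
        field_simp
        ring

theorem one_add_mul_rpow_one_div_le {p x : ℝ} (hp : 1 ≤ p) (hx : 0 ≤ x) :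
    (1 + p * x) ^ (1 / p) ≤ 1 + x := by
  have hp0 : p ≠ 0 := by positivity
  calc (1 + p * x) ^ (1 / p) ≤ ((1 + x) ^ p) ^ (1 / p) := by
        gcongr
        exact one_add_mul_self_le_rpow_one_add (by linarith) hp
    _ = 1 + x := by rw [one_div, Real.rpow_rpow_inv (by positivity) hp0]

theorem two_rpow_one_div_mul_add_div_two_le {x y q : ℝ} (hx : 0 ≤ x) (hy : 0 ≤ y)
    (hq : 1 ≤ q) :
    2 ^ (1 / q) * ((x + y) / 2) ≤ (x ^ q + y ^ q) ^ (1 / q) := by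
  have hq0 : q ≠ 0 := by positivity
  have hmean : ((x + y) / 2) ^ q ≤ (x ^ q + y ^ q) / 2 :=
    (convexOn_rpow hq).map_add_div_two_le hx hy
  calc 2 ^ (1 / q) * ((x + y) / 2) = (2 * ((x + y) / 2) ^ q) ^ (1 / q) := by
        rw [Real.mul_rpow (by norm_num) (by positivity), one_div,
          Real.rpow_rpow_inv (by positivity) hq0]
    _ ≤ (x ^ q + y ^ q) ^ (1 / q) := by gcongr; linarith

theorem stmt18_general (a b s p q : ℝ) (ha : 0 < a) (hab : a < b) (hs0 : 0 < s) (hs1 : s < 1)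
    (hp : 1 < p) (hq : 1 < q) :
    |((b ^ (s + 1) - a ^ (s + 1)) / ((b - a) * (s + 1))) - ((a + b) / 2) ^ s|
      ≤ (b - a) ^ 2 * s * (1 - s) / (16 * (s + 1) ^ (1 / q) * (2 * p + 1) ^ (1 / p)) *
          ((a ^ ((s - 2) * q) + ((a + b) / 2) ^ ((s - 2) * q)) ^ (1 / q)
            + (((a + b) / 2) ^ ((s - 2) * q) + b ^ ((s - 2) * q)) ^ (1 / q)) := by
  have hb : 0 < b := ha.trans hab
  have hm : 0 < (a + b) / 2 := by linarith
  have hX : 0 ≤ (b - a) ^ 2 * s * (1 - s) := mul_nonneg (by positivity) (by linarith)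
  have hmid : ((a + b) / 2) ^ (s - 2) ≤ (a ^ (s - 2) + b ^ (s - 2)) / 2 :=
    (convexOn_rpow_of_nonpos (by linarith)).map_add_div_two_le ha hb
  have hden : 16 * (s + 1) ^ (1 / q) * (2 * p + 1) ^ (1 / p) ≤ 16 * 2 ^ (1 / q) * 3 := by
    have h := one_add_mul_rpow_one_div_le hp.le (zero_le_two (α := ℝ))
    gcongr
    · linarith
    · rw [show 2 * p + 1 = 1 + p * 2 by ring]; linarith
  have hmean : ∀ {u v : ℝ}, 0 < u → 0 < v →
      2 ^ (1 / q) * ((u ^ (s - 2) + v ^ (s - 2)) / 2)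
        ≤ (u ^ ((s - 2) * q) + v ^ ((s - 2) * q)) ^ (1 / q) :=
    fun hu hv ↦ by
      rw [Real.rpow_mul hu.le, Real.rpow_mul hv.le]
      exact two_rpow_one_div_mul_add_div_two_le (by positivity) (by positivity) hq.le
  calc _ ≤ (b - a) ^ 2 * s * (1 - s)
          * (a ^ (s - 2) + 6 * ((a + b) / 2) ^ (s - 2) + b ^ (s - 2)) / 192 :=
        abs_sub_add_div_two_rpow_le ha hab hs0 hs1
    _ ≤ (b - a) ^ 2 * s * (1 - s) / (16 * 2 ^ (1 / q) * 3) *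
          (2 ^ (1 / q) * ((a ^ (s - 2) + ((a + b) / 2) ^ (s - 2)) / 2)
            + 2 ^ (1 / q) * ((((a + b) / 2) ^ (s - 2) + b ^ (s - 2)) / 2)) := by
        field_simp
        nlinarith [mul_le_mul_of_nonneg_left hmid hX]
    _ ≤ _ := by
        gcongr
        exacts [hmean ha hm, hmean hm hb]

theorem stmt18 (a b s p q : ℝ) (ha : 0 < a) (hab : a < b) (hs0 : 0 < s) (hs1 : s < 1)
    (hp : 1 < p) (hq : 1 < q) (hpq : 1 / p + 1 / q = 1) :
    |((b ^ (s + 1) - a ^ (s + 1)) / ((b - a) * (s + 1))) - ((a + b) / 2) ^ s|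
      ≤ (b - a) ^ 2 * s * (1 - s) / (16 * (s + 1) ^ (1 / q) * (2 * p + 1) ^ (1 / p)) *
          ((a ^ ((s - 2) * q) + ((a + b) / 2) ^ ((s - 2) * q)) ^ (1 / q)
            + (((a + b) / 2) ^ ((s - 2) * q) + b ^ ((s - 2) * q)) ^ (1 / q)) :=
  stmt18_general a b s p q ha hab hs0 hs1 hp hq
end
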